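/- arXiv:2206.10913 — 3 statements merged into one kernel-verified Lean document; each statement's English description precedes it below -/
import Mathlib

section
/- (Refined Lieb–Sokal Lemma) Let g(z) + y·f(z) ∈ ℂ[z_1,…,z_n,y] be stable and assume ρ_v(f) ≤ 1 for some v ∈ ℝ^n with all components non-negative. Then g(z) − ∂_v f(z) ∈ ℂ[z_1,…,z_n] is stable or identically zero. -/
open MvPolynomial

/-- A polynomial is stable if it has no root with all imaginary parts positive. -/
def Stable {σ : Type*} (f : MvPolynomial σ ℂ) : Prop :=
  ∀ z : σ → ℂ, (∀ i, 0 < (z i).im) → eval z f ≠ 0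

/-- The polynomial `g(z) + y·f(z) ∈ ℂ[z_1,…,z_n,y]`, where `y` is the last variable. -/
noncomputable def liftPoly {n : ℕ} (g f : MvPolynomial (Fin n) ℂ) :
    MvPolynomial (Fin (n + 1)) ℂ :=
  rename Fin.castSucc g + X (Fin.last n) * rename Fin.castSucc f

/-- The directional derivative `∂_v f = Σ_j v_j ∂f/∂z_j`. -/
noncomputable def dirDeriv {n : ℕ} (v : Fin n → ℝ) (f : MvPolynomial (Fin n) ℂ) :
    MvPolynomial (Fin n) ℂ :=
  ∑ j, C ((v j : ℝ) : ℂ) * pderiv j f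

/-!
Write `a = f(z)` and `b = ∂_v f(z)`. Since `ρ_v(f) ≤ 1`, `f(z + w v) = a + w b`, and `z + w v`
stays in the upper half-space when `Im w ≥ 0` because `v ≥ 0`; so if `f` is stable, then
`Im (b / a) ≤ 0`. That `f` is stable (unless zero) is the limit `y → i∞` of the stability of
`g + y f`. If `h = g - ∂_v f ≢ 0` vanished at `z₀`, the open mapping theorem applied to `h / f` on a
complex line through `z₀` gives a nearby `z` in the upper half-space with `h(z) = -iε a`, `ε > 0`.
Then `y = iε - b / a` has `Im y > 0` and `g(z) + y f(z) = h(z) + b + iε a - b = 0`.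
-/

open Complex Filter Topology

theorem Polynomial.eval_eq_of_derivative_derivative_eq_zero {K : Type*} [Field K] [CharZero K]
    {P : Polynomial K} (h : Polynomial.derivative (Polynomial.derivative P) = 0) (t : K) :
    P.eval t = P.eval 0 + t * (Polynomial.derivative P).eval 0 := by
  set c := (Polynomial.derivative P).eval 0
  have hP' : Polynomial.derivative P = Polynomial.C c := by
    rw [Polynomial.eq_C_of_derivative_eq_zero h, Polynomial.coeff_zero_eq_eval_zero]
  have hQ := Polynomial.eq_C_of_derivative_eq_zero
    (p := P - Polynomial.C c * Polynomial.X) (by simp [hP'])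
  have ht := congrArg (Polynomial.eval t) hQ
  have h0 := congrArg (Polynomial.eval 0) hQ
  simp only [Polynomial.eval_sub, Polynomial.eval_mul, Polynomial.eval_C,
    Polynomial.eval_X] at ht h0
  linear_combination ht - h0

section Line

variable {σ : Type*}

noncomputable def restrictLine (z u : σ → ℂ) : MvPolynomial σ ℂ →ₐ[ℂ] Polynomial ℂ :=
  aeval fun j => Polynomial.C (z j) + Polynomial.C (u j) * Polynomial.X

theorem restrictLine_C (z u : σ → ℂ) (a : ℂ) : restrictLine z u (C a) = Polynomial.C a :=
  aeval_C _ a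

theorem restrictLine_X (z u : σ → ℂ) (j : σ) :
    restrictLine z u (X j) = Polynomial.C (z j) + Polynomial.C (u j) * Polynomial.X :=
  aeval_X _ j

theorem eval_restrictLine (z u : σ → ℂ) (p : MvPolynomial σ ℂ) (t : ℂ) :
    (restrictLine z u p).eval t = eval (z + t • u) p := by
  induction p using MvPolynomial.induction_on with
  | C a => simp
  | add p q hp hq => simp only [map_add, Polynomial.eval_add, hp, hq]
  | mul_X p j hp =>
    simp only [map_mul, Polynomial.eval_mul, hp, restrictLine_X, eval_X]
    simp only [Polynomial.eval_add, Polynomial.eval_C, Polynomial.eval_mul, Polynomial.eval_X,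
      Pi.add_apply, Pi.smul_apply, smul_eq_mul]
    ring

end Line

theorem dirDeriv_add {n : ℕ} (v : Fin n → ℝ) (p q : MvPolynomial (Fin n) ℂ) :
    dirDeriv v (p + q) = dirDeriv v p + dirDeriv v q := by
  simp only [dirDeriv, map_add, mul_add, Finset.sum_add_distrib]

theorem dirDeriv_mul_X {n : ℕ} (v : Fin n → ℝ) (p : MvPolynomial (Fin n) ℂ) (j : Fin n) :
    dirDeriv v (p * X j) = dirDeriv v p * X j + C (v j : ℂ) * p := by
  simp only [dirDeriv, Derivation.leibniz, pderiv_X, Pi.single_apply, smul_eq_mul, mul_ite,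
    mul_one, mul_zero, mul_add, Finset.sum_add_distrib, Finset.sum_ite_eq, Finset.mem_univ,
    if_true, Finset.sum_mul]
  rw [add_comm]
  congr 1
  exact Finset.sum_congr rfl fun i _ => by ring

theorem derivative_restrictLine {n : ℕ} (z : Fin n → ℂ) (v : Fin n → ℝ)
    (p : MvPolynomial (Fin n) ℂ) :
    Polynomial.derivative (restrictLine z (fun j => (v j : ℂ)) p)
      = restrictLine z (fun j => (v j : ℂ)) (dirDeriv v p) := by
  induction p using MvPolynomial.induction_on with
  | C a => simp [dirDeriv]
  | add p q hp hq => simp only [dirDeriv_add, map_add, hp, hq]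
  | mul_X p j hp =>
    set L := restrictLine z fun j => (v j : ℂ)
    rw [dirDeriv_mul_X, map_mul L, map_add L, map_mul L, map_mul L, Polynomial.derivative_mul, hp,
      restrictLine_X]
    simp only [L, restrictLine_C, Polynomial.derivative_add,
      Polynomial.derivative_C, Polynomial.derivative_C_mul_X, zero_add]
    ring

theorem eval_add_smul_of_dirDeriv_dirDeriv_eq_zero {n : ℕ} {v : Fin n → ℝ}
    {f : MvPolynomial (Fin n) ℂ} (hdeg : dirDeriv v (dirDeriv v f) = 0) (z : Fin n → ℂ) (t : ℂ) :
    eval (z + t • fun j => (v j : ℂ)) f = eval z f + t * eval z (dirDeriv v f) := by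
  have hP'' : Polynomial.derivative (Polynomial.derivative (restrictLine z (fun j => (v j : ℂ)) f))
      = 0 := by
    rw [derivative_restrictLine, derivative_restrictLine, hdeg, map_zero]
  rw [← eval_restrictLine, Polynomial.eval_eq_of_derivative_derivative_eq_zero hP'',
    derivative_restrictLine, eval_restrictLine, eval_restrictLine, zero_smul, add_zero]

theorem isOpen_setOf_forall_im_pos {σ : Type*} [Finite σ] :
    IsOpen {z : σ → ℂ | ∀ j, 0 < (z j).im} := by
  simp only [Set.ofPred_forall]
  exact isOpen_iInter_of_finite fun j =>
    isOpen_lt continuous_const (continuous_im.comp (continuous_apply j))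

theorem div_image_mem_nhds_zero {σ : Type*} {p q : MvPolynomial σ ℂ} {z₀ : σ → ℂ}
    (hp : p ≠ 0) (hpz₀ : eval z₀ p = 0) (hqz₀ : eval z₀ q ≠ 0) {U : Set (σ → ℂ)}
    (hU : U ∈ 𝓝 z₀) : (fun z => eval z p / eval z q) '' U ∈ 𝓝 0 := by
  obtain ⟨z₁, hz₁⟩ : ∃ z₁, eval z₁ p ≠ 0 := by
    by_contra! h
    exact hp (MvPolynomial.funext fun z => by simp [h z])
  set L : ℂ → σ → ℂ := fun ζ => z₀ + ζ • (z₁ - z₀)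
  set P := restrictLine z₀ (z₁ - z₀) p
  set Q := restrictLine z₀ (z₁ - z₀) q
  have hP0 : P.eval 0 = 0 := by simpa [P, eval_restrictLine] using hpz₀
  have hQ0 : Q.eval 0 ≠ 0 := by simpa [Q, eval_restrictLine] using hqz₀
  have hφ : AnalyticAt ℂ (fun ζ => P.eval ζ / Q.eval ζ) 0 :=
    (AnalyticOnNhd.eval_polynomial (𝕜 := ℂ) P 0 trivial).div
      (AnalyticOnNhd.eval_polynomial (𝕜 := ℂ) Q 0 trivial) hQ0
  rcases hφ.eventually_constant_or_nhds_le_map_nhds with hconst | hopen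
  · exfalso
    have hPev : (P.eval ·) =ᶠ[𝓝 0] 0 := by
      filter_upwards [hconst, Q.continuous.continuousAt.eventually_ne hQ0] with ζ hζ hQζ
      simpa [hP0, hQζ] using hζ
    apply hz₁
    simpa [P, eval_restrictLine] using
      (AnalyticOnNhd.eval_polynomial (𝕜 := ℂ) P).eqOn_zero_of_preconnected_of_eventuallyEq_zero
        isPreconnected_univ (Set.mem_univ 0) hPev (Set.mem_univ 1)
  · have hLU : L ⁻¹' U ∈ 𝓝 0 :=
      (by fun_prop : Continuous L).continuousAt.preimage_mem_nhds (by simpa [L] using hU)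
    have h := hopen (image_mem_map hLU)
    rw [hP0, zero_div] at h
    refine mem_of_superset h ?_
    rintro _ ⟨ζ, hζ, rfl⟩
    exact ⟨L ζ, hζ, by simp [P, Q, L, eval_restrictLine]⟩

theorem exists_eval_eq_I_mul {σ : Type*} {p q : MvPolynomial σ ℂ} {z₀ : σ → ℂ}
    (hp : p ≠ 0) (hpz₀ : eval z₀ p = 0) (hqz₀ : eval z₀ q ≠ 0) {U : Set (σ → ℂ)}
    (hU : U ∈ 𝓝 z₀) : ∃ z ∈ U, ∃ ε : ℝ, 0 < ε ∧ eval z p = I * ε * eval z q := by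
  obtain ⟨r, hr, hball⟩ := Metric.mem_nhds_iff.mp (div_image_mem_nhds_zero hp hpz₀ hqz₀ hU)
  have hmem : I * (r / 2 : ℝ) ∈ Metric.ball (0 : ℂ) r := by
    simp [abs_of_pos hr, hr]
  obtain ⟨z, hz, hdiv⟩ := hball hmem
  have hqz : eval z q ≠ 0 := fun h => by simp [h, hr.ne'] at hdiv
  exact ⟨z, hz, r / 2, half_pos hr, by rw [← hdiv, div_mul_cancel₀ _ hqz]⟩

section Stable

variable {n : ℕ} {f g : MvPolynomial (Fin n) ℂ}

theorem eval_liftPoly (z : Fin n → ℂ) (y : ℂ) :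
    eval (Fin.snoc z y) (liftPoly g f) = eval z g + y * eval z f := by
  have hz : (Fin.snoc z y : Fin (n + 1) → ℂ) ∘ Fin.castSucc = z := funext fun j => by simp
  simp [liftPoly, eval_rename, hz]

theorem Stable.eval_add_mul_ne_zero (hst : Stable (liftPoly g f)) {z : Fin n → ℂ}
    (hz : ∀ j, 0 < (z j).im) {y : ℂ} (hy : 0 < y.im) : eval z g + y * eval z f ≠ 0 := by
  rw [← eval_liftPoly]
  exact hst _ (Fin.lastCases (by simpa using hy) (fun j => by simpa using hz j))

theorem Stable.of_liftPoly (hst : Stable (liftPoly g f)) (hf : f ≠ 0) : Stable f := by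
  intro z₀ hz₀ hfz₀
  have hgz₀ : eval z₀ g ≠ 0 := fun h => hst.eval_add_mul_ne_zero hz₀ (y := I) (by simp)
    (by simp [h, hfz₀])
  obtain ⟨z, hz, ε, hε, hfz⟩ :=
    exists_eval_eq_I_mul hf hfz₀ hgz₀ (isOpen_setOf_forall_im_pos.mem_nhds hz₀)
  apply hst.eval_add_mul_ne_zero hz (y := I / ε) (by simpa using hε)
  have hε' : (ε : ℂ) ≠ 0 := ofReal_ne_zero.mpr hε.ne'
  rw [hfz]
  field_simp
  linear_combination eval z g * I_sq

theorem Stable.im_div_nonpos (hf : Stable f) {v : Fin n → ℝ} (hv : ∀ j, 0 ≤ v j)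
    (hdeg : dirDeriv v (dirDeriv v f) = 0) {z : Fin n → ℂ} (hz : ∀ j, 0 < (z j).im) :
    (eval z (dirDeriv v f) / eval z f).im ≤ 0 := by
  by_contra! him
  set a := eval z f
  set b := eval z (dirDeriv v f)
  have hb : b ≠ 0 := fun h => by simp [h] at him
  have hw : 0 < (-a / b).im := by
    rw [neg_div, ← inv_div, neg_im, inv_im, neg_div, neg_neg]
    exact div_pos him (normSq_pos.mpr (div_ne_zero hb (hf z hz)))
  apply hf (z + (-a / b) • fun j => (v j : ℂ))
  · intro j
    simpa using add_pos_of_pos_of_nonneg (hz j) (mul_nonneg hw.le (hv j))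
  · rw [eval_add_smul_of_dirDeriv_dirDeriv_eq_zero hdeg]
    field_simp
    ring

end Stable

/-- Refined Lieb–Sokal Lemma: if `g(z) + y·f(z)` is stable, `v ∈ ℝ^n` has
non-negative components, and the degree of `f` in direction `v` is at most 1
(expressed as `∂_v ∂_v f = 0`), then `g − ∂_v f` is stable or identically zero. -/
theorem refined_lieb_sokal {n : ℕ} (f g : MvPolynomial (Fin n) ℂ)
    (hst : Stable (liftPoly g f))
    (v : Fin n → ℝ) (hv : ∀ j, 0 ≤ v j)
    (hdeg : dirDeriv v (dirDeriv v f) = 0) :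
    Stable (g - dirDeriv v f) ∨ g - dirDeriv v f = 0 := by
  refine or_iff_not_imp_right.mpr fun hh z₀ hz₀ hhz₀ => ?_
  by_cases hf : f = 0
  · subst hf
    refine hst.eval_add_mul_ne_zero hz₀ (y := I) (by simp) ?_
    simpa [dirDeriv] using hhz₀
  have hfst := hst.of_liftPoly hf
  obtain ⟨z, hz, ε, hε, hhz⟩ := exists_eval_eq_I_mul (neg_ne_zero.mpr hh)
    (by rw [map_neg, hhz₀, neg_zero]) (hfst z₀ hz₀) (isOpen_setOf_forall_im_pos.mem_nhds hz₀)
  have him := hfst.im_div_nonpos hv hdeg hz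
  have hy : 0 < (I * ε - eval z (dirDeriv v f) / eval z f).im := by
    simp only [sub_im, mul_im, I_re, ofReal_im, mul_zero, I_im, ofReal_re, one_mul, zero_add]
    linarith
  refine hst.eval_add_mul_ne_zero hz hy ?_
  simp only [map_neg, map_sub] at hhz
  field_simp [hfst z hz]
  linear_combination -hhz
end

section
/- Let A, B be real symmetric n×n matrices with B positive definite, and set C = A + iB. Then every eigenvalue λ of C satisfies Im(λ) > 0. -/
/-!
Pairing `C v = λ v` with `v*` gives `λ ‖v‖² = v* A v + i v* B v`. For a real symmetric matrix `M`
the form `v* M v` is real, equal to `xᵀ M x + yᵀ M y` where `v = x + i y`; hence `v* A v` is real and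
`v* B v > 0`, and taking imaginary parts gives `Im λ · ‖v‖² = v* B v > 0`.
-/

open Matrix
open scoped ComplexOrder

namespace Matrix

variable {n : Type*} [Fintype n]

lemma ofReal_comp_dotProduct_mulVec (M : Matrix n n ℝ) (x y : n → ℝ) :
    (Complex.ofReal ∘ x) ⬝ᵥ M.map Complex.ofReal *ᵥ (Complex.ofReal ∘ y) = ↑(x ⬝ᵥ M *ᵥ y) := by
  push_cast [dotProduct, mulVec]
  rfl

lemma IsSymm.star_dotProduct_map_ofReal_mulVec {M : Matrix n n ℝ} (hM : M.IsSymm)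
    (v : n → ℂ) :
    star v ⬝ᵥ M.map Complex.ofReal *ᵥ v =
      ↑((Complex.re ∘ v) ⬝ᵥ M *ᵥ (Complex.re ∘ v) + (Complex.im ∘ v) ⬝ᵥ M *ᵥ (Complex.im ∘ v)) := by
  set x := Complex.re ∘ v
  set y := Complex.im ∘ v
  have hv : v = Complex.ofReal ∘ x + Complex.I • (Complex.ofReal ∘ y) := by
    ext i; simp [x, y, mul_comm Complex.I, Complex.re_add_im]
  have hstar : star v = Complex.ofReal ∘ x - Complex.I • (Complex.ofReal ∘ y) := by
    ext i : 1
    apply Complex.ext <;> simp [x, y]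
  have hyx : y ⬝ᵥ M *ᵥ x = x ⬝ᵥ M *ᵥ y := by
    rw [dotProduct_mulVec, ← mulVec_transpose, hM.eq, dotProduct_comm]
  rw [hstar, hv]
  simp only [mulVec_add, mulVec_smul, dotProduct_add, sub_dotProduct, dotProduct_smul,
    smul_dotProduct, smul_eq_mul, ofReal_comp_dotProduct_mulVec, hyx]
  push_cast
  linear_combination -((y ⬝ᵥ M *ᵥ y : ℝ) : ℂ) * Complex.I_sq

lemma PosDef.map_ofReal {M : Matrix n n ℝ} (hM : M.PosDef) :
    (M.map Complex.ofReal).PosDef := by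
  have hMsymm : M.IsSymm := isHermitian_iff_isSymm.mp hM.isHermitian
  refine .of_dotProduct_mulVec_pos (hM.isHermitian.map _ fun _ ↦ by simp) fun v hv ↦ ?_
  rw [hMsymm.star_dotProduct_map_ofReal_mulVec, Complex.zero_lt_real]
  have hre_or_im : Complex.re ∘ v ≠ 0 ∨ Complex.im ∘ v ≠ 0 := by
    by_contra! h
    exact hv (funext fun i ↦ Complex.ext (congrFun h.1 i) (congrFun h.2 i))
  have hre := hM.posSemidef.dotProduct_mulVec_nonneg (Complex.re ∘ v)
  have him := hM.posSemidef.dotProduct_mulVec_nonneg (Complex.im ∘ v)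
  simp only [star_trivial] at hre him
  rcases hre_or_im with h | h
  · linarith [by simpa using hM.dotProduct_mulVec_pos h]
  · linarith [by simpa using hM.dotProduct_mulVec_pos h]

end Matrix

/-- Let `A, B` be real symmetric matrices with `B` positive definite and set
`C = A + iB`. Then every eigenvalue `λ` of `C` (i.e. `C v = λ v` for some
nonzero vector `v`) has positive imaginary part. -/
theorem eigenvalue_im_pos {n : ℕ} (A B : Matrix (Fin n) (Fin n) ℝ)
    (hA : A.IsSymm) (hB : B.PosDef)
    (C : Matrix (Fin n) (Fin n) ℂ)
    (hC : C = A.map (fun a => (a : ℂ)) + Complex.I • B.map (fun b => (b : ℂ)))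
    (lam : ℂ) (v : Fin n → ℂ) (hv : v ≠ 0) (heig : C.mulVec v = lam • v) :
    0 < lam.im := by
  have hquad : lam * (star v ⬝ᵥ v) =
      star v ⬝ᵥ A.map Complex.ofReal *ᵥ v + Complex.I * (star v ⬝ᵥ B.map Complex.ofReal *ᵥ v) := by
    rw [← smul_eq_mul, ← dotProduct_smul, ← heig, hC, add_mulVec, smul_mulVec, dotProduct_add,
      dotProduct_smul, smul_eq_mul]
  rw [hA.star_dotProduct_map_ofReal_mulVec] at hquad
  have hnorm := Complex.pos_iff.mp (dotProduct_star_self_pos_iff.mpr hv)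
  have hBv := Complex.pos_iff.mp (hB.map_ofReal.dotProduct_mulVec_pos hv)
  have him : lam.im * (star v ⬝ᵥ v).re = (star v ⬝ᵥ B.map Complex.ofReal *ᵥ v).re := by
    simpa [← hnorm.2] using congrArg Complex.im hquad
  exact pos_of_mul_pos_left (him ▸ hBv.1) hnorm.1.le
end

section
/- Let f(Z) = c_α Z^α + c_β Z^β be a psd-stable binomial (c_α, c_β ≠ 0, α ≠ β) in the entries of a symmetric n×n matrix of variables Z, such that the two monomials Z^α and Z^β have no common factor. Then either both monomials involve only diagonal variables, or one of them involves only diagonal variables and the other only off-diagonal variables. -/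
open MvPolynomial

/-- Variables of a symmetric `n×n` matrix of variables: pairs `(i,j)` with `i ≤ j`. -/
abbrev SymVar (n : ℕ) := {p : Fin n × Fin n // p.1 ≤ p.2}

/-- Evaluation of a polynomial in the entries of a symmetric matrix of variables
at a complex matrix `M` (the variable `z_ij` is sent to `M i j`). -/
noncomputable def evalMat {n : ℕ} (M : Matrix (Fin n) (Fin n) ℂ)
    (f : MvPolynomial (SymVar n) ℂ) : ℂ :=
  eval (fun v : SymVar n => M v.1.1 v.1.2) f

/-- A polynomial in the entries of a symmetric `n×n` matrix of variables is
psd-stable if it does not vanish at any complex symmetric matrix whose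
entrywise imaginary part is positive definite. -/
def PsdStable {n : ℕ} (f : MvPolynomial (SymVar n) ℂ) : Prop :=
  ∀ M : Matrix (Fin n) (Fin n) ℂ, M.IsSymm → (M.map Complex.im).PosDef →
    evalMat M f ≠ 0

/-- A monomial (recorded by its exponent function) involves only diagonal variables. -/
def DiagOnly {n : ℕ} (α : SymVar n →₀ ℕ) : Prop :=
  ∀ v : SymVar n, α v ≠ 0 → v.1.1 = v.1.2

/-- A monomial (recorded by its exponent function) involves only off-diagonal variables. -/
def OffOnly {n : ℕ} (α : SymVar n →₀ ℕ) : Prop :=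
  ∀ v : SymVar n, α v ≠ 0 → v.1.1 ≠ v.1.2

/-! Suppose `Z^α` contains an off-diagonal variable `z_u`. Fix the other variables at a point `p`
with `p u = 1` whose imaginary part is a diagonal matrix with entries `≥ 1`. The binomial becomes
`A z_u^k + B` with `k ≥ 1`; if `|B| < |A|`, its roots have modulus `< 1`, so at such a root the
imaginary part is still positive definite (a diagonal matrix `≥ 1` perturbed in the two `u`
positions by less than `1`), contradicting stability. Now take `p` equal to `I` on the diagonal
and `1` off it, except that the entry of another variable `z_q` is multiplied by `s > 0`. Then
`|A| / |B|` is a constant times `s ^ (α q - β q)`, so `|B| < |A|` is reached by `s → ∞` when `z_q`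
occurs in `Z^α` and by `s → 0` when `z_q` is an off-diagonal variable of `Z^β`. Hence `Z^α` has no
diagonal and `Z^β` no off-diagonal variable. -/

open Matrix

namespace Matrix

theorem posDef_diagonal_add_single_add_single {ι : Type*} [Fintype ι] [DecidableEq ι]
    {d : ι → ℝ} (hd : ∀ i, 1 ≤ d i) {a b : ι} (hab : a ≠ b) {ε : ℝ} (hε : |ε| < 1) :
    (diagonal d + single a b ε + single b a ε).PosDef := by
  rw [posDef_iff_dotProduct_mulVec]
  refine ⟨?_, fun x hx => ?_⟩
  · simp only [IsHermitian, conjTranspose_eq_transpose_of_trivial, transpose_add,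
      diagonal_transpose, transpose_single]
    abel
  have hquad : star x ⬝ᵥ (diagonal d + single a b ε + single b a ε) *ᵥ x
      = ∑ i, d i * x i ^ 2 + 2 * ε * x a * x b := by
    simp only [star_trivial, add_mulVec, dotProduct_add, single_mulVec]
    simp only [dotProduct, Function.update_apply, mulVec_diagonal, mul_ite, mul_zero,
      Pi.zero_apply, Finset.sum_ite_eq', Finset.mem_univ, if_true]
    simp only [fun i => show x i * (d i * x i) = d i * x i ^ 2 by ring]
    ring
  have hpos : 0 < ∑ i, x i ^ 2 := by
    obtain ⟨i, hi⟩ := Function.ne_iff.mp hx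
    exact Finset.sum_pos' (fun j _ => sq_nonneg _) ⟨i, Finset.mem_univ i, sq_pos_of_ne_zero hi⟩
  have hdiag : ∑ i, x i ^ 2 ≤ ∑ i, d i * x i ^ 2 :=
    Finset.sum_le_sum fun i _ => le_mul_of_one_le_left (sq_nonneg _) (hd i)
  have hpair : x a ^ 2 + x b ^ 2 ≤ ∑ i, x i ^ 2 := by
    rw [← Finset.sum_pair (f := fun i => x i ^ 2) hab]
    exact Finset.sum_le_sum_of_subset_of_nonneg (Finset.subset_univ _) fun i _ _ => sq_nonneg _
  have hcross : -(|ε| * (x a ^ 2 + x b ^ 2)) ≤ 2 * ε * x a * x b := by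
    cases abs_cases ε <;> nlinarith [sq_nonneg (x a + x b), sq_nonneg (x a - x b)]
  rw [hquad]
  nlinarith [abs_nonneg ε]

end Matrix

namespace MvPolynomial

theorem eval_update_monomial {σ R : Type*} [Fintype σ] [DecidableEq σ] [CommSemiring R]
    {p : σ → R} {u : σ} (hpu : p u = 1) (z : R) (α : σ →₀ ℕ) (c : R) :
    eval (Function.update p u z) (monomial α c) = z ^ α u * eval p (monomial α c) := by
  simp only [eval_monomial, Finsupp.prod_pow]
  rw [← Finset.mul_prod_erase _ _ (Finset.mem_univ u),
    ← Finset.mul_prod_erase _ (fun v => p v ^ α v) (Finset.mem_univ u),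
    Function.update_self, hpu, one_pow, one_mul,
    Finset.prod_congr rfl fun v hv => by rw [Function.update_of_ne (Finset.ne_of_mem_erase hv)]]
  ring

theorem norm_eval_monomial {σ 𝕜 : Type*} [Fintype σ] [NormedField 𝕜] (p : σ → 𝕜)
    (α : σ →₀ ℕ) (c : 𝕜) : ‖eval p (monomial α c)‖ = ‖c‖ * ∏ v, ‖p v‖ ^ α v := by
  simp only [eval_monomial, Finsupp.prod_pow, norm_mul, norm_prod, norm_pow]

end MvPolynomial

theorem exists_one_le_mul_pow_lt_mul_pow {a : ℝ} (ha : 0 < a) (b : ℝ) {k m : ℕ} (hkm : k < m) :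
    ∃ s : ℝ, 1 ≤ s ∧ b * s ^ k < a * s ^ m := by
  obtain ⟨d, rfl⟩ := Nat.exists_eq_add_of_lt hkm
  set s := max 1 (b / a + 1)
  have hs1 : 1 ≤ s := le_max_left _ _
  have hbs : b < a * s := by
    calc b < a * (b / a + 1) := by rw [mul_add, mul_div_cancel₀ _ ha.ne']; linarith
      _ ≤ a * s := by gcongr; exact le_max_right _ _
  refine ⟨s, hs1, ?_⟩
  calc b * s ^ k < a * s * s ^ k := by gcongr
    _ ≤ a * s ^ (d + 1) * s ^ k := by gcongr; exact le_self_pow₀ hs1 d.succ_ne_zero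
    _ = a * s ^ (k + d + 1) := by ring

theorem exists_pos_mul_pow_lt_mul_pow {a b : ℝ} (ha : 0 < a) (hb : 0 ≤ b) {k m : ℕ}
    (hmk : m < k) : ∃ s : ℝ, 0 < s ∧ b * s ^ k < a * s ^ m := by
  obtain ⟨d, rfl⟩ := Nat.exists_eq_add_of_lt hmk
  set s := a / (a + b)
  have hs0 : 0 < s := by positivity
  have hs1 : s ≤ 1 := div_le_one_of_le₀ (by linarith) (by positivity)
  have hbs : b * s < a := by
    rw [mul_div_assoc', div_lt_iff₀ (by positivity)]
    nlinarith
  refine ⟨s, hs0, ?_⟩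
  calc b * s ^ (m + d + 1) = b * s ^ (d + 1) * s ^ m := by ring
    _ ≤ b * s * s ^ m := by gcongr; exact pow_le_of_le_one hs0.le hs1 d.succ_ne_zero
    _ < a * s ^ m := by gcongr

section

variable {n : ℕ}

def symMatrix {R : Type*} (g : SymVar n → R) : Matrix (Fin n) (Fin n) R :=
  fun i j => if h : i ≤ j then g ⟨(i, j), h⟩ else g ⟨(j, i), le_of_not_ge h⟩

theorem symMatrix_apply_of_le {R : Type*} (g : SymVar n → R) {i j : Fin n} (h : i ≤ j) :
    symMatrix g i j = g ⟨(i, j), h⟩ :=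
  dif_pos h

theorem symMatrix_isSymm {R : Type*} (g : SymVar n → R) : (symMatrix g).IsSymm := by
  ext i j
  rcases lt_trichotomy i j with h | rfl | h
  · simp [symMatrix, h.le, h.not_ge]
  · rfl
  · simp [symMatrix, h.le, h.not_ge]

theorem symMatrix_map {R S : Type*} (g : SymVar n → R) (f : R → S) :
    (symMatrix g).map f = symMatrix (f ∘ g) := by
  ext i j
  simp only [map_apply, symMatrix, apply_dite f, Function.comp_apply]

theorem evalMat_symMatrix (g : SymVar n → ℂ) (f : MvPolynomial (SymVar n) ℂ) :
    evalMat (symMatrix g) f = eval g f := by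
  unfold evalMat
  congr
  exact funext fun v => symMatrix_apply_of_le g v.2

theorem symMatrix_eq_diagonal_add_single {h : SymVar n → ℝ} {u : SymVar n}
    (hu : u.1.1 ≠ u.1.2) (hoff : ∀ v : SymVar n, v.1.1 ≠ v.1.2 → v ≠ u → h v = 0) :
    symMatrix h = diagonal (fun i => h ⟨(i, i), le_rfl⟩)
      + single u.1.1 u.1.2 (h u) + single u.1.2 u.1.1 (h u) := by
  obtain ⟨⟨a, b⟩, hab⟩ := u
  have hlt : a < b := lt_of_le_of_ne hab hu
  have hsymm : (diagonal (fun i => h ⟨(i, i), le_rfl⟩) + single a b (h ⟨(a, b), hab⟩)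
      + single b a (h ⟨(a, b), hab⟩)).IsSymm := by
    simp only [IsSymm, transpose_add, diagonal_transpose, transpose_single]
    abel
  ext i j
  wlog hij : i ≤ j generalizing i j
  · rw [← (symMatrix_isSymm h).apply, ← hsymm.apply]
    exact this j i (le_of_not_ge hij)
  rcases hij.lt_or_eq with hij | rfl
  · rw [symMatrix_apply_of_le h hij.le]
    by_cases hv : a = i ∧ b = j
    · obtain ⟨rfl, rfl⟩ := hv
      simp [hij.ne, hij.ne']
    · have hv' : ¬(b = i ∧ a = j) := fun ⟨hb, ha⟩ => (hlt.trans (hb ▸ ha ▸ hij)).false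
      have hne : (⟨(i, j), hij.le⟩ : SymVar n) ≠ ⟨(a, b), hab⟩ := fun e => hv (by simp_all)
      simp [hij.ne, hv, hv', hoff _ hij.ne hne]
  · have hv : ¬(a = i ∧ b = i) := fun ⟨ha, hb⟩ => hlt.ne (ha.trans hb.symm)
    have hv' : ¬(b = i ∧ a = i) := fun ⟨hb, ha⟩ => hlt.ne (ha.trans hb.symm)
    simp [symMatrix, hv, hv']

theorem PsdStable.eval_ne_zero {f : MvPolynomial (SymVar n) ℂ} (hf : PsdStable f)
    {g : SymVar n → ℂ} (hg : (symMatrix fun v => (g v).im).PosDef) : eval g f ≠ 0 := by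
  rw [← evalMat_symMatrix]
  exact hf _ (symMatrix_isSymm g) (by rwa [symMatrix_map])

theorem not_psdStable_of_norm_lt {α β : SymVar n →₀ ℕ} {cα cβ : ℂ} {p : SymVar n → ℂ}
    {u : SymVar n} (hu : u.1.1 ≠ u.1.2) (hpu : p u = 1)
    (hdiag : ∀ v : SymVar n, v.1.1 = v.1.2 → 1 ≤ (p v).im)
    (hoff : ∀ v : SymVar n, v.1.1 ≠ v.1.2 → (p v).im = 0) (hαu : α u ≠ 0) (hβu : β u = 0)
    (hlt : ‖eval p (monomial β cβ)‖ < ‖eval p (monomial α cα)‖) :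
    ¬ PsdStable (monomial α cα + monomial β cβ) := by
  intro hf
  set A := eval p (monomial α cα)
  set B := eval p (monomial β cβ)
  have hA : A ≠ 0 := norm_pos_iff.mp ((norm_nonneg B).trans_lt hlt)
  obtain ⟨z, hz⟩ := IsAlgClosed.exists_pow_nat_eq (-B / A) (Nat.pos_of_ne_zero hαu)
  have hz1 : ‖z‖ < 1 := by
    refine (pow_lt_one_iff_of_nonneg (norm_nonneg z) hαu).mp ?_
    rwa [← norm_pow, hz, norm_div, norm_neg, div_lt_one (norm_pos_iff.mpr hA)]
  refine hf.eval_ne_zero (g := Function.update p u z) ?_ ?_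
  · rw [symMatrix_eq_diagonal_add_single hu fun v hv hvu => by
      rw [Function.update_of_ne hvu]; exact hoff v hv]
    refine posDef_diagonal_add_single_add_single (fun i => ?_) hu ?_
    · rw [Function.update_of_ne fun h => hu (by rw [← h])]
      exact hdiag _ rfl
    · rw [Function.update_self]
      exact (Complex.abs_im_le_norm z).trans_lt hz1
  · rw [map_add, eval_update_monomial hpu, eval_update_monomial hpu, hz, hβu, pow_zero, one_mul,
      div_mul_cancel₀ _ hA, neg_add_cancel]

theorem not_psdStable_of_offDiag {α β : SymVar n →₀ ℕ} {cα cβ : ℂ} (hcα : cα ≠ 0)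
    {u q : SymVar n} (hu : u.1.1 ≠ u.1.2) (hαu : α u ≠ 0) (hβu : β u = 0) (hqu : q ≠ u)
    (hq : β q < α q ∨ α q < β q ∧ q.1.1 ≠ q.1.2) :
    ¬ PsdStable (monomial α cα + monomial β cβ) := by
  obtain ⟨s, hs0, hsq, hlt⟩ : ∃ s : ℝ, 0 < s ∧ (q.1.1 = q.1.2 → 1 ≤ s) ∧
      ‖cβ‖ * s ^ β q < ‖cα‖ * s ^ α q := by
    rcases hq with hq | ⟨hq, hqoff⟩
    · obtain ⟨s, hs1, hlt⟩ := exists_one_le_mul_pow_lt_mul_pow (norm_pos_iff.2 hcα) ‖cβ‖ hq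
      exact ⟨s, one_pos.trans_le hs1, fun _ => hs1, hlt⟩
    · obtain ⟨s, hs0, hlt⟩ :=
        exists_pos_mul_pow_lt_mul_pow (norm_pos_iff.2 hcα) (norm_nonneg cβ) hq
      exact ⟨s, hs0, fun h => absurd h hqoff, hlt⟩
  set p : SymVar n → ℂ := fun v =>
    (if v = q then (s : ℂ) else 1) * (if v.1.1 = v.1.2 then Complex.I else 1)
  have hnorm : ∀ v, ‖p v‖ = if v = q then s else 1 := by
    intro v
    simp only [p]
    split_ifs <;> simp [abs_of_pos hs0]
  have hmono : ∀ (γ : SymVar n →₀ ℕ) (c : ℂ), ‖eval p (monomial γ c)‖ = ‖c‖ * s ^ γ q := by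
    intro γ c
    simp only [norm_eval_monomial, hnorm, ite_pow, one_pow, Fintype.prod_ite_eq']
  refine not_psdStable_of_norm_lt hu (p := p) ?_ ?_ ?_ hαu hβu (by rwa [hmono, hmono])
  · simp [p, hqu.symm, hu]
  · intro v hv
    by_cases hvq : v = q
    · subst hvq
      simp [p, hv, hsq hv]
    · simp [p, hv, hvq]
  · intro v hv
    by_cases hvq : v = q
    · subst hvq
      simp [p, hv]
    · simp [p, hv, hvq]

theorem offOnly_and_diagOnly_of_not_diagOnly {α β : SymVar n →₀ ℕ} {cα cβ : ℂ} (hcα : cα ≠ 0)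
    (hnc : ∀ v : SymVar n, α v = 0 ∨ β v = 0)
    (hf : PsdStable (monomial α cα + monomial β cβ)) (hα : ¬ DiagOnly α) :
    OffOnly α ∧ DiagOnly β := by
  obtain ⟨u, hαu, hu⟩ : ∃ u : SymVar n, α u ≠ 0 ∧ u.1.1 ≠ u.1.2 := by
    simpa [DiagOnly] using hα
  have hβu : β u = 0 := (hnc u).resolve_left hαu
  refine ⟨fun v hαv hv => ?_, fun v hβv => by_contra fun hv => ?_⟩
  · have hβv : β v = 0 := (hnc v).resolve_left hαv
    exact not_psdStable_of_offDiag hcα hu hαu hβu (by rintro rfl; exact hu hv)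
      (.inl (hβv ▸ Nat.pos_of_ne_zero hαv)) hf
  · have hαv : α v = 0 := (hnc v).resolve_right hβv
    exact not_psdStable_of_offDiag hcα hu hαu hβu (by rintro rfl; exact hβv hβu)
      (.inr ⟨hαv ▸ Nat.pos_of_ne_zero hβv, hv⟩) hf

end

theorem psdStable_binomial_structure_general {n : ℕ} (α β : SymVar n →₀ ℕ)
    (cα cβ : ℂ) (hcα : cα ≠ 0) (hcβ : cβ ≠ 0)
    (hnc : ∀ v : SymVar n, α v = 0 ∨ β v = 0)
    (hf : PsdStable (monomial α cα + monomial β cβ)) :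
    (DiagOnly α ∧ DiagOnly β) ∨ (DiagOnly α ∧ OffOnly β) ∨
      (OffOnly α ∧ DiagOnly β) := by
  by_cases hα : DiagOnly α
  · by_cases hβ : DiagOnly β
    · exact .inl ⟨hα, hβ⟩
    · rw [add_comm] at hf
      exact .inr (.inl (offOnly_and_diagOnly_of_not_diagOnly hcβ
        (fun v => (hnc v).symm) hf hβ).symm)
  · exact .inr (.inr (offOnly_and_diagOnly_of_not_diagOnly hcα hnc hf hα))

/-- In a psd-stable binomial whose two monomials have no common factor, either
both monomials involve only diagonal variables, or one involves only diagonal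
and the other only off-diagonal variables. -/
theorem psdStable_binomial_structure {n : ℕ} (α β : SymVar n →₀ ℕ)
    (cα cβ : ℂ) (hcα : cα ≠ 0) (hcβ : cβ ≠ 0) (hne : α ≠ β)
    (hnc : ∀ v : SymVar n, α v = 0 ∨ β v = 0)
    (hf : PsdStable (monomial α cα + monomial β cβ)) :
    (DiagOnly α ∧ DiagOnly β) ∨ (DiagOnly α ∧ OffOnly β) ∨
      (OffOnly α ∧ DiagOnly β) :=
  psdStable_binomial_structure_general α β cα cβ hcα hcβ hnc hf
end
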